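/- Let h ∈ ℂ[X,Y] have non-empty right Newton polygon whose first right vertex of Δ_h lies on the horizontal axis; let F be the first segment of the right polygon (the one nearest the horizontal axis) and (μ,ν) its upper end. Then every segment T of the right Newton polygon of ∂h/∂Y that is not of the form S − (0,1) for a segment S of the right polygon of h (a non-standard segment) satisfies (|T₁|/|T₂|)·σ(T) ≤ (|F₁|/|F₂|)·σ(F), and if such T is parallel to F then in(∂h/∂Y, T) = ∂/∂Y in(h, F). -/

import Mathlib

open scoped Classical

noncomputable section

/-- A (candidate) segment in the plane, given by its two lattice endpoints. -/
structure Seg where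
  P : ℕ × ℕ
  Q : ℕ × ℕ

/-- the support of a polynomial in two variables, as a finite set of pairs `(α,β)`. -/
def supp (h : MvPolynomial (Fin 2) ℂ) : Finset (ℕ × ℕ) :=
  h.support.image fun d => (d 0, d 1)

/-- the coefficient `h_{αβ}` of `X^α Y^β` in `h`. -/
def coeff2 (h : MvPolynomial (Fin 2) ℂ) (p : ℕ × ℕ) : ℂ :=
  MvPolynomial.coeff (Finsupp.single 0 p.1 + Finsupp.single 1 p.2) h

/-- the linear functional whose level lines are parallel to `S`, normalized so that
(for a right-polygon segment, `S.P.2 < S.Q.2`) its gradient points to the right. -/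
def lfun (S : Seg) (v : ℕ × ℕ) : ℤ :=
  ((S.Q.2 : ℤ) - S.P.2) * v.1 - ((S.Q.1 : ℤ) - S.P.1) * v.2

/-- the linear functional whose level lines are parallel to `S`, normalized so that
(for a top-polygon segment, `S.P.1 < S.Q.1`) its gradient points upwards. -/
def gfun (S : Seg) (v : ℕ × ℕ) : ℤ :=
  ((S.Q.1 : ℤ) - S.P.1) * v.2 - ((S.Q.2 : ℤ) - S.P.2) * v.1

/-- `v` lies on the segment with endpoints `S.P` and `S.Q`
(collinear and inside the bounding box). -/
def OnSeg (S : Seg) (v : ℕ × ℕ) : Prop :=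
  lfun S v = lfun S S.P ∧
  min S.P.1 S.Q.1 ≤ v.1 ∧ v.1 ≤ max S.P.1 S.Q.1 ∧
  min S.P.2 S.Q.2 ≤ v.2 ∧ v.2 ≤ max S.P.2 S.Q.2

/-- `S` is a segment (one-dimensional boundary face) of the right Newton polygon of `h`:
its endpoints (ordered by increasing ordinate) are in the support, the whole support lies
weakly to the left of the line through `S` (the supporting line has outward normal with
positive first coordinate), and `S` is a maximal face: every support point on this line has
ordinate between those of the endpoints. Such segments are exactly the boundary faces on
the right of the Newton diagram joining the lines `β = ord_Y h` and `β = deg_Y h`. -/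
def RightSeg (h : MvPolynomial (Fin 2) ℂ) (S : Seg) : Prop :=
  S.P ∈ supp h ∧ S.Q ∈ supp h ∧ S.P.2 < S.Q.2 ∧
  (∀ v ∈ supp h, lfun S v ≤ lfun S S.P) ∧
  (∀ v ∈ supp h, lfun S v = lfun S S.P → S.P.2 ≤ v.2 ∧ v.2 ≤ S.Q.2)

/-- `S` is a segment of the top Newton polygon of `h` (endpoints ordered by increasing
abscissa; the supporting line has outward normal with positive second coordinate). -/
def TopSeg (h : MvPolynomial (Fin 2) ℂ) (S : Seg) : Prop :=
  S.P ∈ supp h ∧ S.Q ∈ supp h ∧ S.P.1 < S.Q.1 ∧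
  (∀ v ∈ supp h, gfun S v ≤ gfun S S.P) ∧
  (∀ v ∈ supp h, gfun S v = gfun S S.P → S.P.1 ≤ v.1 ∧ v.1 ≤ S.Q.1)

/-- `σ(S)` for a right-polygon segment (endpoints ordered by increasing ordinate):
`0` if `S` is vertical, otherwise minus the sign of the slope of `S`. -/
def sigmaR (S : Seg) : ℤ :=
  if S.P.1 = S.Q.1 then 0 else if S.P.1 < S.Q.1 then -1 else 1

/-- `σ(S)` for a top-polygon segment (endpoints ordered by increasing abscissa). -/
def sigmaT (S : Seg) : ℤ :=
  if S.P.2 = S.Q.2 then 0 else if S.P.2 < S.Q.2 then -1 else 1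

/-- `|S₁|`, the length of the projection of `S` on the horizontal axis. -/
def len1 (S : Seg) : ℚ := |(S.Q.1 : ℚ) - S.P.1|

/-- `|S₂|`, the length of the projection of `S` on the vertical axis. -/
def len2 (S : Seg) : ℚ := |(S.Q.2 : ℚ) - S.P.2|

/-- the declivity `(|S₁|/|S₂|)·σ(S)` of a right-polygon segment. -/
def decl (S : Seg) : ℚ := len1 S / len2 S * (sigmaR S : ℚ)

/-- the declivity `(|S₂|/|S₁|)·σ(S)` of a top-polygon segment. -/
def tdecl (S : Seg) : ℚ := len2 S / len1 S * (sigmaT S : ℚ)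

/-- `α(S)`: the abscissa of the intersection of the line through `S` with the
horizontal axis. -/
def alphaS (S : Seg) : ℚ := (S.P.1 : ℚ) + (S.P.2 : ℚ) * decl S

/-- `β(S)`: the ordinate of the intersection of the line through `S` with the
vertical axis. -/
def betaS (S : Seg) : ℚ := (S.P.2 : ℚ) + (S.P.1 : ℚ) * tdecl S

/-- a right-polygon segment is exceptional if it joins the horizontal axis with a
point of the form `(p, 1)`. -/
def RExcep (S : Seg) : Prop := S.P.2 = 0 ∧ S.Q.2 = 1

/-- a top-polygon segment is exceptional if it joins the vertical axis with a
point of the form `(1, q)`. -/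
def TExcep (S : Seg) : Prop := S.P.1 = 0 ∧ S.Q.1 = 1

/-- `in(h,S)`: the sum of the monomials of `h` supported on the segment `S`. -/
def inPoly (h : MvPolynomial (Fin 2) ℂ) (S : Seg) : MvPolynomial (Fin 2) ℂ :=
  ∑ p ∈ (supp h).filter (OnSeg S),
    MvPolynomial.monomial (Finsupp.single 0 p.1 + Finsupp.single 1 p.2) (coeff2 h p)

/-! The support of `∂h/∂Y` is that of `h` with the points off the horizontal axis moved down
by one. So if `T + (0,1)` is not a segment of the right polygon of `h`, the obstruction is a
point `v` of `supp h` on the horizontal axis lying weakly beyond the line through `T + (0,1)`;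
as `F` starts on the axis, `v` is weakly left of `F.P`. Since `F.Q - (0,1) ∈ supp ∂h/∂Y`, the
linear form `ℓ` of `T` satisfies `ℓ(F.Q) ≤ ℓ(T.P + (0,1)) ≤ ℓ(v) ≤ ℓ(F.P)`, which compares
the declivities. If `T ∥ F` these are equalities, so `F` and `T + (0,1)` span the same line
and the monomials of `∂h/∂Y` on `T` are the derivatives of those of `h` on `F`. -/

open MvPolynomial

lemma single_add_single_injective :
    Function.Injective fun p : ℕ × ℕ => Finsupp.single (0 : Fin 2) p.1 + Finsupp.single 1 p.2 := by
  intro p q hpq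
  have h0 := congrArg (· 0) hpq
  have h1 := congrArg (· 1) hpq
  simp only [Finsupp.add_apply, Finsupp.single_apply] at h0 h1
  exact Prod.ext (by simpa using h0) (by simpa using h1)

lemma single_add_single_eval (d : Fin 2 →₀ ℕ) :
    Finsupp.single 0 (d 0) + Finsupp.single 1 (d 1) = d := by
  ext i
  fin_cases i <;> simp

lemma ext_coeff2 {f g : MvPolynomial (Fin 2) ℂ} (hfg : ∀ p, coeff2 f p = coeff2 g p) : f = g := by
  ext d
  simpa only [coeff2, single_add_single_eval] using hfg (d 0, d 1)

lemma mem_supp_iff {h : MvPolynomial (Fin 2) ℂ} {p : ℕ × ℕ} : p ∈ supp h ↔ coeff2 h p ≠ 0 := by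
  simp only [supp, coeff2, Finset.mem_image, mem_support_iff]
  constructor
  · rintro ⟨d, hd, rfl⟩
    rwa [single_add_single_eval]
  · exact fun hp => ⟨_, hp, by simp⟩

lemma coeff2_pderiv (h : MvPolynomial (Fin 2) ℂ) (p : ℕ × ℕ) :
    coeff2 (pderiv 1 h) p = coeff2 h (p.1, p.2 + 1) * (p.2 + 1) := by
  simp [coeff2, coeff_pderiv, add_assoc]

lemma mem_supp_pderiv {h : MvPolynomial (Fin 2) ℂ} {p : ℕ × ℕ} :
    p ∈ supp (pderiv 1 h) ↔ (p.1, p.2 + 1) ∈ supp h := by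
  simp [mem_supp_iff, coeff2_pderiv, Nat.cast_add_one_ne_zero]

lemma coeff2_inPoly (h : MvPolynomial (Fin 2) ℂ) (S : Seg) (p : ℕ × ℕ) :
    coeff2 (inPoly h S) p = if OnSeg S p then coeff2 h p else 0 := by
  rw [coeff2, inPoly, coeff_sum]
  simp only [coeff_monomial, single_add_single_injective.eq_iff, Finset.sum_ite_eq',
    Finset.mem_filter]
  by_cases hp : p ∈ supp h
  · simp [hp]
  · simp [hp, not_not.mp (mem_supp_iff.not.mp hp)]

lemma inPoly_pderiv_eq_pderiv_inPoly {h : MvPolynomial (Fin 2) ℂ} {S T : Seg}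
    (hST : ∀ q : ℕ × ℕ, (q.1, q.2 + 1) ∈ supp h → (OnSeg T q ↔ OnSeg S (q.1, q.2 + 1))) :
    inPoly (pderiv 1 h) T = pderiv 1 (inPoly h S) := by
  refine ext_coeff2 fun q => ?_
  rw [coeff2_inPoly, coeff2_pderiv, coeff2_pderiv, coeff2_inPoly]
  by_cases hq : (q.1, q.2 + 1) ∈ supp h
  · simp only [hST q hq]
    split_ifs <;> simp
  · simp [not_not.mp (mem_supp_iff.not.mp hq)]

def Seg.shiftUp (S : Seg) : Seg := ⟨(S.P.1, S.P.2 + 1), (S.Q.1, S.Q.2 + 1)⟩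

lemma lfun_shiftUp (S : Seg) (v : ℕ × ℕ) : lfun S.shiftUp v = lfun S v := by
  simp only [lfun, Seg.shiftUp]
  push_cast
  ring

lemma lfun_add_snd_one (S : Seg) (a b : ℕ) :
    lfun S (a, b + 1) = lfun S (a, b) - ((S.Q.1 : ℤ) - S.P.1) := by
  simp only [lfun]
  push_cast
  ring

lemma lfun_shiftUp_P (S : Seg) : lfun S S.shiftUp.P = lfun S S.P - ((S.Q.1 : ℤ) - S.P.1) :=
  lfun_add_snd_one S S.P.1 S.P.2

lemma onSeg_of_lfun_eq {S : Seg} {v : ℕ × ℕ} (hS : S.P.2 < S.Q.2)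
    (hv : lfun S v = lfun S S.P) (hP : S.P.2 ≤ v.2) (hQ : v.2 ≤ S.Q.2) : OnSeg S v := by
  refine ⟨hv, ?_⟩
  have hcol : ((S.Q.2 : ℤ) - S.P.2) * ((v.1 : ℤ) - S.P.1)
      = ((S.Q.1 : ℤ) - S.P.1) * ((v.2 : ℤ) - S.P.2) := by
    simp only [lfun] at hv
    linarith
  have hP' : (S.P.2 : ℤ) ≤ v.2 := by exact_mod_cast hP
  have hQ' : (v.2 : ℤ) ≤ S.Q.2 := by exact_mod_cast hQ
  have hd : (0 : ℤ) < (S.Q.2 : ℤ) - S.P.2 := by omega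
  rcases le_total S.P.1 S.Q.1 with hx | hx
  · have hx' : (S.P.1 : ℤ) ≤ S.Q.1 := by exact_mod_cast hx
    have h1 : (S.P.1 : ℤ) ≤ v.1 := by nlinarith
    have h2 : (v.1 : ℤ) ≤ S.Q.1 := by nlinarith
    omega
  · have hx' : (S.Q.1 : ℤ) ≤ S.P.1 := by exact_mod_cast hx
    have h1 : (S.Q.1 : ℤ) ≤ v.1 := by nlinarith
    have h2 : (v.1 : ℤ) ≤ S.P.1 := by nlinarith
    omega

lemma onSeg_iff_of_rightSeg {h : MvPolynomial (Fin 2) ℂ} {S : Seg} {v : ℕ × ℕ}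
    (hS : RightSeg h S) (hv : v ∈ supp h) : OnSeg S v ↔ lfun S v = lfun S S.P := by
  refine ⟨fun hon => hon.1, fun hl => ?_⟩
  obtain ⟨hP, hQ⟩ := hS.2.2.2.2 v hv hl
  exact onSeg_of_lfun_eq hS.2.2.1 hl hP hQ

lemma decl_eq {S : Seg} (hS : S.P.2 < S.Q.2) :
    decl S = ((S.P.1 : ℚ) - S.Q.1) / ((S.Q.2 : ℚ) - S.P.2) := by
  have hS' : (S.P.2 : ℚ) < S.Q.2 := by exact_mod_cast hS
  rw [decl, len1, len2, sigmaR, abs_of_pos (sub_pos.mpr hS')]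
  rcases lt_trichotomy S.P.1 S.Q.1 with hx | hx | hx
  · have hx' : (S.P.1 : ℚ) < S.Q.1 := by exact_mod_cast hx
    rw [if_neg hx.ne, if_pos hx, abs_of_pos (sub_pos.mpr hx')]
    ring
  · simp [hx]
  · have hx' : (S.Q.1 : ℚ) < S.P.1 := by exact_mod_cast hx
    rw [if_neg hx.ne', if_neg hx.not_gt, abs_of_neg (sub_neg.mpr hx')]
    ring

lemma decl_le_decl_iff {S T : Seg} (hS : S.P.2 < S.Q.2) (hT : T.P.2 < T.Q.2) :
    decl T ≤ decl S ↔ lfun T S.Q ≤ lfun T S.P := by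
  have hS' : (0 : ℚ) < (S.Q.2 : ℚ) - S.P.2 := sub_pos.mpr (by exact_mod_cast hS)
  have hT' : (0 : ℚ) < (T.Q.2 : ℚ) - T.P.2 := sub_pos.mpr (by exact_mod_cast hT)
  rw [decl_eq hS, decl_eq hT, div_le_div_iff₀ hT' hS', ← Int.cast_le (R := ℚ)]
  simp only [lfun]
  push_cast
  constructor <;> intro H <;> linarith

lemma decl_eq_decl_iff {S T : Seg} (hS : S.P.2 < S.Q.2) (hT : T.P.2 < T.Q.2) :
    decl T = decl S ↔ lfun T S.Q = lfun T S.P := by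
  have hS' : (0 : ℚ) < (S.Q.2 : ℚ) - S.P.2 := sub_pos.mpr (by exact_mod_cast hS)
  have hT' : (0 : ℚ) < (T.Q.2 : ℚ) - T.P.2 := sub_pos.mpr (by exact_mod_cast hT)
  rw [decl_eq hS, decl_eq hT, div_eq_div_iff hT'.ne' hS'.ne', ← Int.cast_inj (α := ℚ)]
  simp only [lfun]
  push_cast
  constructor <;> intro H <;> linarith

lemma lfun_eq_iff_of_parallel {S T : Seg} (hS : S.P.2 < S.Q.2) (hT : T.P.2 < T.Q.2)
    (hpar : lfun T S.Q = lfun T S.P) (v w : ℕ × ℕ) :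
    lfun T v = lfun T w ↔ lfun S v = lfun S w := by
  have hprop : ∀ u, ((S.Q.2 : ℤ) - S.P.2) * lfun T u = ((T.Q.2 : ℤ) - T.P.2) * lfun S u := by
    intro u
    simp only [lfun] at hpar ⊢
    linear_combination (u.2 : ℤ) * hpar
  have hS' : ((S.Q.2 : ℤ) - S.P.2) ≠ 0 := by omega
  have hT' : ((T.Q.2 : ℤ) - T.P.2) ≠ 0 := by omega
  rw [← mul_right_inj' hS', hprop, hprop, mul_right_inj' hT']

section RightSegPderiv

variable {h : MvPolynomial (Fin 2) ℂ} {F T : Seg}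

lemma lfun_le_lfun_shiftUp (hT : RightSeg (pderiv 1 h) T) {a b : ℕ}
    (hv : (a, b + 1) ∈ supp h) : lfun T (a, b + 1) ≤ lfun T T.shiftUp.P := by
  have hle := hT.2.2.2.1 (a, b) (mem_supp_pderiv.mpr hv)
  rw [lfun_add_snd_one, lfun_shiftUp_P]
  exact sub_le_sub_right hle _

lemma rightSeg_shiftUp (hT : RightSeg (pderiv 1 h) T)
    (haxis : ∀ v ∈ supp h, v.2 = 0 → lfun T v < lfun T T.shiftUp.P) :
    RightSeg h T.shiftUp := by
  refine ⟨mem_supp_pderiv.mp hT.1, mem_supp_pderiv.mp hT.2.1, Nat.succ_lt_succ hT.2.2.1, ?_, ?_⟩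
  all_goals simp only [lfun_shiftUp]
  · rintro ⟨a, _ | b⟩ hv
    · exact (haxis _ hv rfl).le
    · exact lfun_le_lfun_shiftUp hT hv
  · rintro ⟨a, _ | b⟩ hv hl
    · exact absurd hl (haxis _ hv rfl).ne
    · have hline : lfun T (a, b) = lfun T T.P := by
        rw [lfun_add_snd_one, lfun_shiftUp_P] at hl
        simpa using hl
      have hb := hT.2.2.2.2 _ (mem_supp_pderiv.mpr hv) hline
      simp only [Seg.shiftUp]
      omega

lemma lfun_le_lfun_of_snd_eq_zero (hF : RightSeg h F) (hax : F.P.2 = 0) (hT : T.P.2 < T.Q.2)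
    {v : ℕ × ℕ} (hv : v ∈ supp h) (hv0 : v.2 = 0) : lfun T v ≤ lfun T F.P := by
  have hle := hF.2.2.2.1 v hv
  have hFQ : 0 < F.Q.2 := hax ▸ hF.2.2.1
  simp only [lfun, hax, hv0] at hle ⊢
  have hv1 : (v.1 : ℤ) ≤ F.P.1 := by
    push_cast at hle
    nlinarith
  push_cast
  nlinarith

lemma lfun_Q_le_lfun_shiftUp_P_le_lfun_P (hF : RightSeg h F) (hax : F.P.2 = 0)
    (hT : RightSeg (pderiv 1 h) T) (hns : ¬ RightSeg h T.shiftUp) :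
    lfun T F.Q ≤ lfun T T.shiftUp.P ∧ lfun T T.shiftUp.P ≤ lfun T F.P := by
  constructor
  · have hFQ : F.Q = (F.Q.1, F.Q.2 - 1 + 1) :=
      Prod.ext rfl (Nat.sub_add_cancel (hax ▸ hF.2.2.1 : 0 < F.Q.2)).symm
    rw [hFQ]
    exact lfun_le_lfun_shiftUp hT (hFQ ▸ hF.2.1)
  · by_contra! hlt
    exact hns (rightSeg_shiftUp hT fun v hv hv0 =>
      (lfun_le_lfun_of_snd_eq_zero hF hax hT.2.2.1 hv hv0).trans_lt hlt)

end RightSegPderiv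

/-- Proposition 8.1 (a),(b): suppose the right Newton polygon of `h` is non-empty and
the first right vertex of `Δ_h` lies on the horizontal axis; let `F` be the first segment
of the right polygon (so `F.P.2 = 0`). A segment `T` of the right polygon of `∂h/∂Y`
is *standard* if `T = S − (0,1)` for some segment `S` of the right polygon of `h`.
Then every non-standard segment `T` satisfies
`(|T₁|/|T₂|)·σ(T) ≤ (|F₁|/|F₂|)·σ(F)`, and if moreover `T` is parallel to `F`
(equal declivities) then `in(∂h/∂Y, T) = ∂/∂Y in(h, F)`. -/
theorem stmt17 (h : MvPolynomial (Fin 2) ℂ) (F : Seg) (hF : RightSeg h F)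
    (hax : F.P.2 = 0)
    (T : Seg) (hT : RightSeg (MvPolynomial.pderiv (1 : Fin 2) h) T)
    (hns : ¬ ∃ S : Seg, RightSeg h S ∧
      S.P = (T.P.1, T.P.2 + 1) ∧ S.Q = (T.Q.1, T.Q.2 + 1)) :
    decl T ≤ decl F ∧
    (decl T = decl F →
      inPoly (MvPolynomial.pderiv (1 : Fin 2) h) T
        = MvPolynomial.pderiv (1 : Fin 2) (inPoly h F)) := by
  obtain ⟨hQ, hP⟩ :=
    lfun_Q_le_lfun_shiftUp_P_le_lfun_P hF hax hT fun hS => hns ⟨_, hS, rfl, rfl⟩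
  refine ⟨(decl_le_decl_iff hF.2.2.1 hT.2.2.1).mpr (hQ.trans hP), fun hdecl => ?_⟩
  have hpar := (decl_eq_decl_iff hF.2.2.1 hT.2.2.1).mp hdecl
  have hline : lfun T T.shiftUp.P = lfun T F.P := by omega
  refine inPoly_pderiv_eq_pderiv_inPoly fun q hq => ?_
  rw [onSeg_iff_of_rightSeg hT (mem_supp_pderiv.mpr hq), onSeg_iff_of_rightSeg hF hq,
    ← lfun_eq_iff_of_parallel hF.2.2.1 hT.2.2.1 hpar, ← hline, lfun_add_snd_one,
    lfun_shiftUp_P, sub_left_inj]
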